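/- Let p be a probability density on ℝ^d, v ∈ ℝ^d, and define the tilted density p_v(x) ∝ p(x)·exp(⟨x,v⟩). For σ ∈ (0,1), let q_σ denote the law of √(1−σ²)·X + σ·Z where X ∼ q and Z ∼ N(0, I_d). Then for all x ∈ ℝ^d, the score of the noised tilted distribution satisfies ∇ log (p_v)_σ(x) = v/√(1−σ²) + ∇ log p_σ(x + σ²·v/√(1−σ²)). -/

import Mathlib

/-!
With `t = √(1 - σ²)`, completing the square turns `exp (⟪z, v⟫/t) · exp (-‖z - x‖²/(2σ²))` into
`exp (σ²‖v‖²/(2t²) + ⟪x, v⟫/t) · exp (-‖z - (x + (σ²/t) v)‖²/(2σ²))`, so the noised tilted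
density is a positive constant times `exp (⟪x, v⟫/t)` times the noised density shifted by
`(σ²/t) v`.
Taking logarithms and gradients gives the identity; the gradient on the right exists because
`p_σ` is differentiable (differentiate under the integral: the Gaussian factor times its
derivative is bounded by `1/σ`) and positive.
-/

open MeasureTheory
open scoped RealInnerProductSpace

/-- The linearly tilted density `p(·;v) ∝ p(·) exp⟨·,v⟩`. -/
noncomputable def tilt (d : ℕ) (p : EuclideanSpace ℝ (Fin d) → ℝ)
    (v : EuclideanSpace ℝ (Fin d)) (x : EuclideanSpace ℝ (Fin d)) : ℝ :=
  p x * Real.exp ⟪x, v⟫ / ∫ y, p y * Real.exp ⟪y, v⟫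

/-- The density of `√(1−σ²)·X + σ·Z` where `X ∼ q` and `Z ∼ N(0, I_d)`:
`q_σ(x) = (2πσ²)^{−d/2} t^{−d} ∫ q(t⁻¹ y) exp(−‖y−x‖²/(2σ²)) dy`, `t = √(1−σ²)`. -/
noncomputable def noised (d : ℕ) (q : EuclideanSpace ℝ (Fin d) → ℝ) (σ : ℝ)
    (x : EuclideanSpace ℝ (Fin d)) : ℝ :=
  (2 * Real.pi * σ ^ 2) ^ (-(d : ℝ) / 2) * Real.sqrt (1 - σ ^ 2) ^ (-(d : ℝ)) *
    ∫ y, q ((Real.sqrt (1 - σ ^ 2))⁻¹ • y) * Real.exp (-‖y - x‖ ^ 2 / (2 * σ ^ 2))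

section GaussianKernel

variable {E : Type*} [NormedAddCommGroup E]

lemma integrable_mul_exp_neg_norm_sub_sq [MeasurableSpace E] [BorelSpace E] {μ : Measure E}
    {c : E → ℝ} (hc : Integrable c μ) (σ : ℝ) (x : E) :
    Integrable (fun y => c y * Real.exp (-‖y - x‖ ^ 2 / (2 * σ ^ 2))) μ := by
  refine hc.mul_bdd (c := 1) (Continuous.aestronglyMeasurable (by fun_prop))
    (ae_of_all _ fun y => ?_)
  rw [Real.norm_eq_abs, abs_of_pos (Real.exp_pos _), Real.exp_le_one_iff]
  exact div_nonpos_of_nonpos_of_nonneg (neg_nonpos.2 (sq_nonneg _)) (by positivity)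

variable [InnerProductSpace ℝ E]

lemma mul_exp_neg_sq_div_le {σ : ℝ} (hσ : 0 < σ) (u : ℝ) :
    u * Real.exp (-u ^ 2 / (2 * σ ^ 2)) ≤ σ := by
  have hlin : u ≤ σ * (u ^ 2 / (2 * σ ^ 2) + 1) := by
    rw [← sub_nonneg]
    have : σ * (u ^ 2 / (2 * σ ^ 2) + 1) - u = ((u - σ) ^ 2 + σ ^ 2) / (2 * σ) := by
      field_simp; ring
    rw [this]; positivity
  rw [neg_div, Real.exp_neg, ← div_eq_mul_inv, div_le_iff₀ (Real.exp_pos _)]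
  exact hlin.trans (mul_le_mul_of_nonneg_left (Real.add_one_le_exp _) hσ.le)

lemma hasFDerivAt_exp_neg_norm_sub_sq {σ : ℝ} (hσ : σ ≠ 0) (y x : E) :
    HasFDerivAt (fun x => Real.exp (-‖y - x‖ ^ 2 / (2 * σ ^ 2)))
      ((Real.exp (-‖y - x‖ ^ 2 / (2 * σ ^ 2)) / σ ^ 2) • innerSL ℝ (y - x)) x := by
  have hsq := ((hasStrictFDerivAt_norm_sq (y - x)).hasFDerivAt.comp x
    ((hasFDerivAt_id x).const_sub y))
  convert (hsq.mul_const (-(2 * σ ^ 2)⁻¹)).exp using 1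
  · ext x
    simp only [Function.comp_apply]
    ring_nf
  · ext h
    simp only [map_sub, smul_apply, sub_apply,
      coe_innerSL_apply, smul_eq_mul, Function.comp_apply, ContinuousLinearMap.comp_neg,
      ContinuousLinearMap.comp_id, smul_neg, neg_smul, neg_neg, nsmul_eq_mul,
      Nat.cast_ofNat]
    field_simp

lemma norm_exp_neg_norm_sub_sq_smul_innerSL_le {σ : ℝ} (hσ : 0 < σ) (y x : E) :
    ‖(Real.exp (-‖y - x‖ ^ 2 / (2 * σ ^ 2)) / σ ^ 2) • innerSL ℝ (y - x)‖ ≤ σ⁻¹ := by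
  rw [norm_smul, innerSL_apply_norm, Real.norm_eq_abs, abs_of_pos (by positivity),
    div_mul_eq_mul_div, mul_comm, div_le_iff₀ (by positivity)]
  calc ‖y - x‖ * Real.exp (-‖y - x‖ ^ 2 / (2 * σ ^ 2)) ≤ σ :=
        mul_exp_neg_sq_div_le hσ _
    _ = σ⁻¹ * σ ^ 2 := by field_simp

lemma differentiableAt_integral_mul_exp_neg_norm_sub_sq [MeasurableSpace E] [BorelSpace E]
    [SecondCountableTopology E] {μ : Measure E} {c : E → ℝ} (hc : Integrable c μ)
    {σ : ℝ} (hσ : 0 < σ) (x : E) :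
    DifferentiableAt ℝ (fun x => ∫ y, c y * Real.exp (-‖y - x‖ ^ 2 / (2 * σ ^ 2)) ∂μ) x :=
  (hasFDerivAt_integral_of_dominated_of_fderiv_le Filter.univ_mem
    (F' := fun x y => c y • (Real.exp (-‖y - x‖ ^ 2 / (2 * σ ^ 2)) / σ ^ 2) •
      innerSL ℝ (y - x))
    (bound := fun y => ‖c y‖ * σ⁻¹)
    (Filter.Eventually.of_forall fun x =>
      (integrable_mul_exp_neg_norm_sub_sq hc σ x).aestronglyMeasurable)
    (integrable_mul_exp_neg_norm_sub_sq hc σ x)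
    (hc.aestronglyMeasurable.smul (by fun_prop))
    (ae_of_all _ fun y x _ => by
      rw [norm_smul]
      exact mul_le_mul_of_nonneg_left (norm_exp_neg_norm_sub_sq_smul_innerSL_le hσ y x)
        (norm_nonneg _))
    (hc.norm.mul_const _)
    (ae_of_all _ fun y x _ => (hasFDerivAt_exp_neg_norm_sub_sq hσ.ne' y x).const_mul (c y))
    ).differentiableAt

end GaussianKernel

lemma integral_mul_pos_of_integral_pos {α : Type*} [MeasurableSpace α] {μ : Measure α}
    {c g : α → ℝ} (hc : ∀ a, 0 ≤ c a) (hg : ∀ a, 0 < g a)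
    (hcg : Integrable (fun a => c a * g a) μ) (hc_pos : 0 < ∫ a, c a ∂μ) :
    0 < ∫ a, c a * g a ∂μ := by
  have hc_int : Integrable c μ := Integrable.of_integral_ne_zero hc_pos.ne'
  have hsupp : Function.support (fun a => c a * g a) = Function.support c := by
    ext a; simp [(hg a).ne']
  rw [integral_pos_iff_support_of_nonneg (fun a => mul_nonneg (hc a) (hg a).le) hcg, hsupp]
  exact (integral_pos_iff_support_of_nonneg hc hc_int).1 hc_pos

lemma inner_add_neg_norm_sub_sq_eq {E : Type*} [NormedAddCommGroup E] [InnerProductSpace ℝ E]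
    {σ t : ℝ} (hσ : σ ≠ 0) (ht : t ≠ 0) (v y z : E) :
    t⁻¹ * ⟪z, v⟫ + -‖z - y‖ ^ 2 / (2 * σ ^ 2) =
      σ ^ 2 * ‖v‖ ^ 2 / (2 * t ^ 2) + t⁻¹ * ⟪y, v⟫ +
        -‖z - (y + (σ ^ 2 / t) • v)‖ ^ 2 / (2 * σ ^ 2) := by
  rw [← sub_sub, norm_sub_sq_real (z - y), real_inner_smul_right, inner_sub_left, norm_smul,
    Real.norm_eq_abs, mul_pow, sq_abs]
  field_simp
  ring

lemma hasGradientAt_const_add_inner_add_comp_add {E : Type*} [NormedAddCommGroup E]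
    [InnerProductSpace ℝ E] [CompleteSpace E] {f : E → ℝ} {x a : E}
    (hf : DifferentiableAt ℝ f (x + a)) (c : ℝ) (w : E) :
    HasGradientAt (fun y => c + ⟪y, w⟫ + f (y + a)) (w + gradient f (x + a)) x := by
  have hinner : HasFDerivAt (fun y : E => ⟪y, w⟫) (InnerProductSpace.toDual ℝ E w) x := by
    convert (InnerProductSpace.toDual ℝ E w).hasFDerivAt using 1
    ext y
    simp [real_inner_comm]
  have hshift :=
    (hasFDerivAt_comp_add_right a).2 (hasGradientAt_iff_hasFDerivAt.1 hf.hasGradientAt)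
  rw [hasGradientAt_iff_hasFDerivAt, map_add]
  exact (hinner.const_add c).add hshift

section Noising

variable {d : ℕ}

lemma noised_pos {q : EuclideanSpace ℝ (Fin d) → ℝ} (hq : ∀ x, 0 ≤ q x) (hq_pos : 0 < ∫ x, q x)
    {σ : ℝ} (hσ : σ ∈ Set.Ioo 0 1) (x : EuclideanSpace ℝ (Fin d)) : 0 < noised d q σ x := by
  obtain ⟨hσ₀, hσ₁⟩ := hσ
  have ht : 0 < Real.sqrt (1 - σ ^ 2) := Real.sqrt_pos.2 (by nlinarith)
  have hcomp : 0 < ∫ y, q ((Real.sqrt (1 - σ ^ 2))⁻¹ • y) := by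
    rw [Measure.integral_comp_inv_smul_of_nonneg volume q ht.le, smul_eq_mul]
    positivity
  exact mul_pos (by positivity) (integral_mul_pos_of_integral_pos (fun y => hq _)
    (fun y => Real.exp_pos _)
    (integrable_mul_exp_neg_norm_sub_sq (Integrable.of_integral_ne_zero hcomp.ne') σ x) hcomp)

lemma differentiableAt_noised {q : EuclideanSpace ℝ (Fin d) → ℝ} (hq : Integrable q)
    {σ : ℝ} (hσ : σ ∈ Set.Ioo 0 1) (x : EuclideanSpace ℝ (Fin d)) :
    DifferentiableAt ℝ (noised d q σ) x := by
  obtain ⟨hσ₀, hσ₁⟩ := hσ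
  have ht : Real.sqrt (1 - σ ^ 2) ≠ 0 := (Real.sqrt_pos.2 (by nlinarith)).ne'
  exact (differentiableAt_integral_mul_exp_neg_norm_sub_sq
    ((integrable_comp_smul_iff volume q (inv_ne_zero ht)).2 hq) hσ₀ x).const_mul _

lemma noised_tilt (p : EuclideanSpace ℝ (Fin d) → ℝ) (v : EuclideanSpace ℝ (Fin d))
    {σ : ℝ} (hσ : σ ∈ Set.Ioo 0 1) (x : EuclideanSpace ℝ (Fin d)) :
    noised d (tilt d p v) σ x =
      Real.exp (σ ^ 2 * ‖v‖ ^ 2 / (2 * Real.sqrt (1 - σ ^ 2) ^ 2)) /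
          (∫ y, p y * Real.exp ⟪y, v⟫) * Real.exp ((Real.sqrt (1 - σ ^ 2))⁻¹ * ⟪x, v⟫) *
        noised d p σ (x + (σ ^ 2 / Real.sqrt (1 - σ ^ 2)) • v) := by
  obtain ⟨hσ₀, hσ₁⟩ := hσ
  have ht : Real.sqrt (1 - σ ^ 2) ≠ 0 := (Real.sqrt_pos.2 (by nlinarith)).ne'
  simp only [noised, tilt, real_inner_smul_left]
  set t := Real.sqrt (1 - σ ^ 2)
  set C := ∫ y, p y * Real.exp ⟪y, v⟫
  have hpoint : ∀ y, p (t⁻¹ • y) * Real.exp (t⁻¹ * ⟪y, v⟫) / C *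
        Real.exp (-‖y - x‖ ^ 2 / (2 * σ ^ 2)) =
      Real.exp (σ ^ 2 * ‖v‖ ^ 2 / (2 * t ^ 2)) / C * Real.exp (t⁻¹ * ⟪x, v⟫) *
        (p (t⁻¹ • y) * Real.exp (-‖y - (x + (σ ^ 2 / t) • v)‖ ^ 2 / (2 * σ ^ 2))) := by
    intro y
    have hexp := congrArg Real.exp (inner_add_neg_norm_sub_sq_eq hσ₀.ne' ht v x y)
    simp only [Real.exp_add] at hexp
    linear_combination p (t⁻¹ • y) / C * hexp
  simp only [hpoint, integral_const_mul]
  ring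

end Noising

theorem stmt0 (d : ℕ) (p : EuclideanSpace ℝ (Fin d) → ℝ)
    (v : EuclideanSpace ℝ (Fin d))
    (hp_nonneg : ∀ x, 0 ≤ p x) (hp_int : ∫ x, p x = 1)
    (hp_tilt : Integrable (fun x => p x * Real.exp ⟪x, v⟫))
    (σ : ℝ) (hσ : σ ∈ Set.Ioo (0 : ℝ) 1) (x : EuclideanSpace ℝ (Fin d)) :
    gradient (fun y => Real.log (noised d (tilt d p v) σ y)) x =
      (Real.sqrt (1 - σ ^ 2))⁻¹ • v +
        gradient (fun y => Real.log (noised d p σ y))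
          (x + (σ ^ 2 / Real.sqrt (1 - σ ^ 2)) • v) := by
  set t := Real.sqrt (1 - σ ^ 2)
  set C := ∫ y, p y * Real.exp ⟪y, v⟫
  set K := σ ^ 2 * ‖v‖ ^ 2 / (2 * t ^ 2)
  have hp_pos : 0 < ∫ x, p x := hp_int ▸ one_pos
  have hC : 0 < C :=
    integral_mul_pos_of_integral_pos hp_nonneg (fun _ => Real.exp_pos _) hp_tilt hp_pos
  have hlog : (fun y => Real.log (noised d (tilt d p v) σ y)) =
      fun y => (K - Real.log C) + ⟪y, t⁻¹ • v⟫ +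
        Real.log (noised d p σ (y + (σ ^ 2 / t) • v)) := by
    funext y
    rw [noised_tilt p v hσ y,
      Real.log_mul (by positivity) (noised_pos hp_nonneg hp_pos hσ _).ne',
      Real.log_mul (by positivity) (Real.exp_ne_zero _),
      Real.log_div (Real.exp_ne_zero _) hC.ne', Real.log_exp, Real.log_exp,
      real_inner_smul_right]
  rw [hlog]
  exact (hasGradientAt_const_add_inner_add_comp_add
    ((differentiableAt_noised (integrable_of_integral_eq_one hp_int) hσ _).log
      (noised_pos hp_nonneg hp_pos hσ _).ne') _ _).gradient
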